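/- arXiv:1203.1465 — 2 statements merged into one kernel-verified Lean document; each statement's English description precedes it below -/
import Mathlib

section
/- Let $G$ be a connected semisimple algebraic group over an algebraically closed field of characteristic zero, $\lambda$ a dominant weight, and $\pi$ any weight of the irreducible representation $V(\lambda)$. Then $\lambda - \pi$ is a nonnegative integer combination of the positive roots $\beta$ whose support (as a combination of simple roots) meets the support of $\lambda$, i.e. $\pi \leq^{\lambda} \lambda$. -/
open Finset

/-!  Combinatorial model of the weight theory of a connected semisimple algebraic
group (characteristic zero).  Weights are written in coordinates with respect to
the basis `Δ` of simple roots (for a semisimple group every weight is a rational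
combination of the simple roots), so the ambient space is `ι → ℚ`, the simple
root `α i` is `Pi.single i 1`, and `A i j = ⟨α i, (α j)ᵛ⟩` is the Cartan matrix.
`Φ` is the set of positive roots (in simple-root coordinates).  -/

variable {ι : Type*} [Fintype ι] [DecidableEq ι]

/-- `⟨x, (α j)ᵛ⟩`, the pairing of `x` (in simple-root coordinates) with the
`j`-th simple coroot. -/
def pairRt (A : ι → ι → ℤ) (x : ι → ℚ) (j : ι) : ℚ := ∑ i, x i * (A i j : ℚ)

/-- `x` is a dominant weight. -/
def IsDom (A : ι → ι → ℤ) (x : ι → ℚ) : Prop := ∀ j, 0 ≤ pairRt A x j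

/-- `x` lies in the weight lattice `Λ` (all coroot pairings are integers). -/
def IsIntegralWt (A : ι → ι → ℤ) (x : ι → ℚ) : Prop := ∀ j, ∃ m : ℤ, pairRt A x j = m

/-- `x ∈ ℕ[Δ]`, i.e. all simple-root coordinates of `x` are natural numbers. -/
def NatCoords (x : ι → ℚ) : Prop := ∀ i, ∃ m : ℕ, x i = m

/-- `x ∈ ℕ[S]`: `x` is a finite sum of elements of `S`. -/
def InNatSpan (S : Set (ι → ℚ)) (x : ι → ℚ) : Prop := x ∈ AddSubmonoid.closure S

/-- `Φ⁺(λ)`: positive roots whose support over `Δ` meets `Supp(λ)`. -/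
def PhiPlusLam (A : ι → ι → ℤ) (Φ : Set (ι → ℚ)) (lam : ι → ℚ) : Set (ι → ℚ) :=
  {β | β ∈ Φ ∧ ∃ i, pairRt A lam i ≠ 0 ∧ β i ≠ 0}

/-- `Φ` is the system of positive roots attached to the Cartan matrix `A` of a
(semisimple) root system. -/
structure IsPosSystem (A : ι → ι → ℤ) (Φ : Set (ι → ℚ)) : Prop where
  cartan_diag : ∀ i, A i i = 2
  cartan_offdiag : ∀ i j, i ≠ j → A i j ≤ 0
  cartan_symm_zero : ∀ i j, A i j = 0 ↔ A j i = 0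
  simple_mem : ∀ i, (Pi.single i 1 : ι → ℚ) ∈ Φ
  coords_nat : ∀ β ∈ Φ, NatCoords β
  reflect_mem : ∀ β ∈ Φ, ∀ j, β ≠ Pi.single j 1 →
    (β - pairRt A β j • (Pi.single j 1 : ι → ℚ)) ∈ Φ
  finite : Φ.Finite

/-- The simple reflection `s j` (as a self-map of the weight space). -/
def reflFun (A : ι → ι → ℤ) (j : ι) : Function.End (ι → ℚ) :=
  fun x => x - pairRt A x j • (Pi.single j 1 : ι → ℚ)

/-- The Weyl group, realized as the monoid of self-maps generated by the simple
reflections (it is in fact a group, each generator being an involution). -/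
def Weyl (A : ι → ι → ℤ) : Submonoid (Function.End (ι → ℚ)) :=
  Submonoid.closure {f | ∃ j, f = reflFun A j}

/-- The Weyl group orbit of `x`. -/
def weylOrbit (A : ι → ι → ℤ) (x : ι → ℚ) : Set (ι → ℚ) :=
  {y | ∃ w ∈ Weyl A, w x = y}

/-- `π ∈ Π(lam)`: `π` is a weight of the irreducible module `V(lam)`; we use the
standard combinatorial description `Π(λ) = W · Π⁺(λ)` with
`Π⁺(λ) = {μ dominant : μ ≤ λ}`. -/
def IsWeightOf (A : ι → ι → ℤ) (lam π : ι → ℚ) : Prop :=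
  ∃ μ, IsDom A μ ∧ NatCoords (lam - μ) ∧ π ∈ weylOrbit A μ

/-!
STATEMENT 1.  Let `G` be a connected semisimple algebraic group (char. 0), `lam` a
dominant weight and `π` any weight of `V(lam)`.  Then `lam - π` is a nonnegative
integer combination of the positive roots whose support meets `Supp(lam)`,
i.e. `π ≤^lam lam`.
-/


section WtBasics
open Finset
set_option linter.unusedSectionVars false
set_option linter.unusedVariables false

variable {ι : Type*} [Fintype ι] [DecidableEq ι]

/-- abbreviation for the `i`-th simple root. -/
private def al (i : ι) : ι → ℚ := Pi.single i 1

lemma al_apply (i k : ι) : al i k = if k = i then 1 else 0 := by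
  simp [al, Pi.single_apply]

lemma al_self (i : ι) : al i i = 1 := by simp [al_apply]

lemma al_ne (i k : ι) (h : k ≠ i) : al i k = 0 := by simp [al_apply, h]

lemma al_ne_zero (i : ι) : al i ≠ 0 := by
  intro h
  have := congrFun h i
  simp [al_self] at this

lemma single_decomp (x : ι → ℚ) : ∑ i, x i • al i = x := by
  funext k
  rw [Finset.sum_apply]
  rw [Finset.sum_eq_single k]
  · simp [al_self]
  · intro b _ hb
    exact mul_eq_zero.mpr (Or.inr (al_ne b k (Ne.symm hb)))
  · intro h; exact absurd (Finset.mem_univ k) h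

section PairLemmas

variable (A : ι → ι → ℤ)

lemma pair_add (x y : ι → ℚ) (j : ι) :
    pairRt A (x + y) j = pairRt A x j + pairRt A y j := by
  simp [pairRt, add_mul, Finset.sum_add_distrib]

lemma pair_zero (j : ι) : pairRt A (0 : ι → ℚ) j = 0 := by simp [pairRt]

lemma pair_smul (c : ℚ) (x : ι → ℚ) (j : ι) :
    pairRt A (c • x) j = c * pairRt A x j := by
  simp [pairRt, Finset.mul_sum, mul_assoc]

lemma pair_neg (x : ι → ℚ) (j : ι) : pairRt A (-x) j = -pairRt A x j := by
  simp [pairRt, Finset.sum_neg_distrib]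

lemma pair_sub (x y : ι → ℚ) (j : ι) :
    pairRt A (x - y) j = pairRt A x j - pairRt A y j := by
  simp [pairRt, sub_mul, Finset.sum_sub_distrib]

lemma pair_single (i j : ι) : pairRt A (al i) j = A i j := by
  unfold pairRt
  rw [Finset.sum_eq_single i]
  · simp [al_self]
  · intro b _ hb; simp [al_ne i b hb]
  · intro h; exact absurd (Finset.mem_univ i) h

lemma pair_natCoords_int (x : ι → ℚ) (hx : NatCoords x) (j : ι) :
    ∃ m : ℤ, pairRt A x j = m := by
  classical
  choose f hf using hx
  refine ⟨∑ i, (f i : ℤ) * A i j, ?_⟩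
  unfold pairRt
  push_cast
  exact Finset.sum_congr rfl fun i _ => by rw [hf i]

/-- simple reflection basic formulas -/
lemma refl_apply (j : ι) (x : ι → ℚ) :
    reflFun A j x = x - pairRt A x j • al j := rfl

lemma refl_add (j : ι) (x y : ι → ℚ) :
    reflFun A j (x + y) = reflFun A j x + reflFun A j y := by
  simp only [refl_apply, pair_add, add_smul]
  abel

lemma refl_smul (j : ι) (c : ℚ) (x : ι → ℚ) :
    reflFun A j (c • x) = c • reflFun A j x := by
  simp only [refl_apply, pair_smul, smul_sub, mul_smul]

lemma refl_linear (j : ι) : IsLinearMap ℚ (reflFun A j) :=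
  ⟨refl_add A j, refl_smul A j⟩

lemma pair_refl (j : ι) (x : ι → ℚ) (k : ι) :
    pairRt A (reflFun A j x) k = pairRt A x k - pairRt A x j * A j k := by
  rw [refl_apply, pair_sub, pair_smul, pair_single]

lemma refl_invol (hd : ∀ i, A i i = 2) (j : ι) (x : ι → ℚ) :
    reflFun A j (reflFun A j x) = x := by
  have h1 : pairRt A (reflFun A j x) j = -pairRt A x j := by
    rw [pair_refl A, hd j]; push_cast; ring
  rw [refl_apply, h1, refl_apply]
  module

lemma refl_al_self (hd : ∀ i, A i i = 2) (j : ι) :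
    reflFun A j (al j) = -al j := by
  rw [refl_apply, pair_single, hd j]
  push_cast
  module

lemma refl_coord_ne (j : ι) (x : ι → ℚ) (k : ι) (h : k ≠ j) :
    reflFun A j x k = x k := by
  simp [refl_apply, al_ne j k h, Pi.sub_apply, Pi.smul_apply]

end PairLemmas

end WtBasics
section WtWords
open Finset
set_option linter.unusedSectionVars false
set_option linter.unusedVariables false

variable {ι : Type*} [Fintype ι] [DecidableEq ι]
variable (A : ι → ι → ℤ)

/-- action of a word of simple reflections -/
def wp (L : List ι) : (ι → ℚ) → (ι → ℚ) := L.foldr (fun j f => reflFun A j ∘ f) id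

@[simp] lemma wp_nil : wp A ([] : List ι) = id := rfl

@[simp] lemma wp_cons (j : ι) (L : List ι) :
    wp A (j :: L) = reflFun A j ∘ wp A L := rfl

lemma wp_append (L1 L2 : List ι) : wp A (L1 ++ L2) = wp A L1 ∘ wp A L2 := by
  induction L1 with
  | nil => rfl
  | cons a L ih => simp [wp_cons, ih]; rfl

lemma wp_add (L : List ι) (x y : ι → ℚ) :
    wp A L (x + y) = wp A L x + wp A L y := by
  induction L with
  | nil => rfl
  | cons a L ih =>
      show reflFun A a (wp A L (x + y)) = reflFun A a (wp A L x) + reflFun A a (wp A L y)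
      rw [ih, refl_add]

lemma wp_smul (L : List ι) (c : ℚ) (x : ι → ℚ) :
    wp A L (c • x) = c • wp A L x := by
  induction L with
  | nil => rfl
  | cons a L ih =>
      show reflFun A a (wp A L (c • x)) = c • reflFun A a (wp A L x)
      rw [ih, refl_smul]

lemma wp_linear (L : List ι) : IsLinearMap ℚ (wp A L) :=
  ⟨wp_add A L, wp_smul A L⟩

lemma wp_neg (L : List ι) (x : ι → ℚ) : wp A L (-x) = - wp A L x := by
  have := wp_smul A L (-1) x
  simpa using this

lemma wp_sub (L : List ι) (x y : ι → ℚ) :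
    wp A L (x - y) = wp A L x - wp A L y := by
  rw [sub_eq_add_neg, wp_add, wp_neg, sub_eq_add_neg]

lemma wp_zero (L : List ι) : wp A L 0 = 0 := by
  have := wp_smul A L 0 0
  simpa using this

lemma wp_eval (L : List ι) (x : ι → ℚ) :
    wp A L x = ∑ i, x i • wp A L (al i) := by
  have h := map_sum (IsLinearMap.mk' (wp A L) (wp_linear A L))
    (fun i => x i • al i) Finset.univ
  simp only [IsLinearMap.mk'_apply, single_decomp, wp_smul] at h
  exact h

lemma wp_rev_wp (hd : ∀ i, A i i = 2) (L : List ι) (x : ι → ℚ) :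
    wp A L.reverse (wp A L x) = x := by
  induction L generalizing x with
  | nil => rfl
  | cons a L ih =>
      have e1 : (a :: L).reverse = L.reverse ++ [a] := by simp
      rw [e1, wp_append]
      show wp A L.reverse (reflFun A a (reflFun A a (wp A L x))) = x
      rw [refl_invol A hd, ih]

lemma wp_wp_rev (hd : ∀ i, A i i = 2) (L : List ι) (x : ι → ℚ) :
    wp A L (wp A L.reverse x) = x := by
  have := wp_rev_wp A hd L.reverse x
  rwa [List.reverse_reverse] at this

lemma wp_integral (L : List ι) (x : ι → ℚ) (hx : IsIntegralWt A x) :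
    IsIntegralWt A (wp A L x) := by
  induction L with
  | nil => exact hx
  | cons a L ih =>
      intro k
      show ∃ m : ℤ, pairRt A (reflFun A a (wp A L x)) k = m
      rw [pair_refl A a _ k]
      obtain ⟨m1, hm1⟩ := ih k
      obtain ⟨m2, hm2⟩ := ih a
      exact ⟨m1 - m2 * A a k, by rw [hm1, hm2]; push_cast; ring⟩

end WtWords
section WtSets
open Finset
set_option linter.unusedSectionVars false
set_option linter.unusedVariables false

variable {ι : Type*} [Fintype ι] [DecidableEq ι]
variable {A : ι → ι → ℤ} {Φ : Set (ι → ℚ)}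

/-- nonzero positive roots, as a finset -/
noncomputable def Pfin (hS : IsPosSystem A Φ) : Finset (ι → ℚ) :=
  hS.finite.toFinset.filter (· ≠ 0)

lemma mem_Pfin {hS : IsPosSystem A Φ} {β : ι → ℚ} :
    β ∈ Pfin hS ↔ β ∈ Φ ∧ β ≠ 0 := by
  simp [Pfin, Set.Finite.mem_toFinset]

lemma Pfin_nat {hS : IsPosSystem A Φ} {β : ι → ℚ} (h : β ∈ Pfin hS) :
    NatCoords β := hS.coords_nat β (mem_Pfin.mp h).1

lemma natCoords_nonneg {x : ι → ℚ} (h : NatCoords x) (i : ι) : 0 ≤ x i := by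
  obtain ⟨m, hm⟩ := h i
  rw [hm]; positivity

lemma Pfin_nonneg {hS : IsPosSystem A Φ} {β : ι → ℚ} (h : β ∈ Pfin hS) (i : ι) :
    0 ≤ β i := natCoords_nonneg (Pfin_nat h) i

lemma al_mem_Pfin (hS : IsPosSystem A Φ) (i : ι) : al i ∈ Pfin hS :=
  mem_Pfin.mpr ⟨hS.simple_mem i, al_ne_zero i⟩

/-- negatives of positive roots -/
noncomputable def Nfin (hS : IsPosSystem A Φ) : Finset (ι → ℚ) :=
  (Pfin hS).image (fun v => -v)

lemma mem_Nfin {hS : IsPosSystem A Φ} {v : ι → ℚ} :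
    v ∈ Nfin hS ↔ -v ∈ Pfin hS := by
  constructor
  · rintro h
    obtain ⟨b, hb, rfl⟩ := Finset.mem_image.mp h
    simpa using hb
  · intro h
    exact Finset.mem_image.mpr ⟨-v, h, by simp⟩

noncomputable def PNfin (hS : IsPosSystem A Φ) : Finset (ι → ℚ) :=
  Pfin hS ∪ Nfin hS

lemma P_disj_N {hS : IsPosSystem A Φ} {β : ι → ℚ}
    (h1 : β ∈ Pfin hS) (h2 : β ∈ Nfin hS) : False := by
  have hz : β = 0 := by
    funext i
    have a1 := Pfin_nonneg h1 i
    have a2 := Pfin_nonneg (mem_Nfin.mp h2) i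
    simp only [Pi.neg_apply] at a2
    have : β i ≤ 0 := by linarith
    exact le_antisymm this a1
  exact (mem_Pfin.mp h1).2 hz

lemma mem_PN_of_P {hS : IsPosSystem A Φ} {v : ι → ℚ} (h : v ∈ Pfin hS) :
    v ∈ PNfin hS := Finset.mem_union_left _ h

lemma mem_PN_of_N {hS : IsPosSystem A Φ} {v : ι → ℚ} (h : v ∈ Nfin hS) :
    v ∈ PNfin hS := Finset.mem_union_right _ h

lemma sign_lemma {hS : IsPosSystem A Φ} {v : ι → ℚ}
    (h : v ∈ PNfin hS) (hv : ∀ i, 0 ≤ v i) : v ∈ Pfin hS := by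
  rcases Finset.mem_union.mp h with h | h
  · exact h
  · exfalso
    have h1 := mem_Nfin.mp h
    have hz : v = 0 := by
      funext i
      have a1 := Pfin_nonneg h1 i
      have a2 := hv i
      simp only [Pi.neg_apply] at a1
      have : v i = 0 := le_antisymm (by linarith) a2
      simpa using this
    exact (mem_Pfin.mp h1).2 (by simp [hz])

lemma refl_zero (A : ι → ι → ℤ) (j : ι) : reflFun A j (0 : ι → ℚ) = 0 := by
  simp [refl_apply, pair_zero]

lemma refl_neg (A : ι → ι → ℤ) (j : ι) (x : ι → ℚ) :
    reflFun A j (-x) = - reflFun A j x := by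
  have := refl_smul A j (-1) x
  simpa using this

lemma refl_mem_P {hS : IsPosSystem A Φ} (j : ι) {β : ι → ℚ}
    (h : β ∈ Pfin hS) (hne : β ≠ al j) : reflFun A j β ∈ Pfin hS := by
  obtain ⟨hΦm, hnz⟩ := mem_Pfin.mp h
  refine mem_Pfin.mpr ⟨hS.reflect_mem β hΦm j hne, ?_⟩
  intro h0
  apply hnz
  have := congrArg (reflFun A j) h0
  rwa [refl_invol A hS.cartan_diag, refl_zero] at this

lemma refl_mem_PN {hS : IsPosSystem A Φ} (j : ι) {v : ι → ℚ}
    (h : v ∈ PNfin hS) : reflFun A j v ∈ PNfin hS := by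
  rcases Finset.mem_union.mp h with h | h
  · by_cases hne : v = al j
    · subst hne
      rw [refl_al_self A hS.cartan_diag]
      exact mem_PN_of_N (mem_Nfin.mpr (by simpa using al_mem_Pfin hS j))
    · exact mem_PN_of_P (refl_mem_P j h hne)
  · have h1 := mem_Nfin.mp h
    by_cases hne : -v = al j
    · have hv : v = -al j := neg_eq_iff_eq_neg.mp hne
      rw [hv, refl_neg, refl_al_self A hS.cartan_diag, neg_neg]
      exact mem_PN_of_P (al_mem_Pfin hS j)
    · have : reflFun A j v = -(reflFun A j (-v)) := by rw [refl_neg, neg_neg]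
      rw [this]
      exact mem_PN_of_N (mem_Nfin.mpr (by simpa using refl_mem_P j h1 hne))

lemma wp_mem_PN {hS : IsPosSystem A Φ} (L : List ι) {v : ι → ℚ}
    (h : v ∈ PNfin hS) : wp A L v ∈ PNfin hS := by
  induction L with
  | nil => exact h
  | cons a L ih => exact refl_mem_PN a ih

lemma al_mem_PN (hS : IsPosSystem A Φ) (i : ι) : al i ∈ PNfin hS :=
  mem_PN_of_P (al_mem_Pfin hS i)

end WtSets
section WtBform
open Finset
set_option linter.unusedSectionVars false
set_option linter.unusedVariables false
set_option maxHeartbeats 800000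

variable {ι : Type*} [Fintype ι] [DecidableEq ι]
variable {A : ι → ι → ℤ} {Φ : Set (ι → ℚ)}

/-- the Weyl group as a set of plain functions -/
def WS (A : ι → ι → ℤ) : Set ((ι → ℚ) → (ι → ℚ)) := {w | ∃ L : List ι, w = wp A L}

lemma id_mem_WS : (id : (ι → ℚ) → (ι → ℚ)) ∈ WS A := ⟨[], rfl⟩

lemma wp_mem_WS (L : List ι) : wp A L ∈ WS A := ⟨L, rfl⟩

lemma comp_mem_WS {w1 w2 : (ι → ℚ) → (ι → ℚ)} (h1 : w1 ∈ WS A) (h2 : w2 ∈ WS A) :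
    w1 ∘ w2 ∈ WS A := by
  obtain ⟨L1, rfl⟩ := h1
  obtain ⟨L2, rfl⟩ := h2
  exact ⟨L1 ++ L2, (wp_append A L1 L2).symm⟩

lemma WS_finite (hS : IsPosSystem A Φ) : (WS A).Finite := by
  classical
  let T := {x // x ∈ PNfin hS}
  let F : (WS A) → (T → T) := fun w n =>
    ⟨w.1 n.1, by
      obtain ⟨L, hL⟩ := w.2
      rw [hL]
      exact wp_mem_PN L n.2⟩
  have hinj : Function.Injective F := by
    intro w1 w2 hF
    have key : ∀ v ∈ PNfin hS, w1.1 v = w2.1 v := by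
      intro v hv
      exact congrArg Subtype.val (congrFun hF ⟨v, hv⟩)
    apply Subtype.ext
    funext x
    obtain ⟨L1, hL1⟩ := w1.2
    obtain ⟨L2, hL2⟩ := w2.2
    have e1 : w1.1 x = ∑ i, x i • w1.1 (al i) := by rw [hL1]; exact wp_eval A L1 x
    have e2 : w2.1 x = ∑ i, x i • w2.1 (al i) := by rw [hL2]; exact wp_eval A L2 x
    rw [e1, e2]
    refine Finset.sum_congr rfl fun i _ => ?_
    rw [key (al i) (al_mem_PN hS i)]
  have : Finite (WS A) := Finite.of_injective F hinj
  exact Set.finite_coe_iff.mp this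

/-- the Weyl group as a finset of plain functions -/
noncomputable def Wfin (hS : IsPosSystem A Φ) : Finset ((ι → ℚ) → (ι → ℚ)) :=
  (WS_finite hS).toFinset

lemma mem_Wfin {hS : IsPosSystem A Φ} {w : (ι → ℚ) → (ι → ℚ)} :
    w ∈ Wfin hS ↔ ∃ L : List ι, w = wp A L := by
  simp [Wfin, Set.Finite.mem_toFinset, WS, Set.mem_setOf_eq]

lemma id_mem_Wfin (hS : IsPosSystem A Φ) :
    (id : (ι → ℚ) → (ι → ℚ)) ∈ Wfin hS := mem_Wfin.mpr ⟨[], rfl⟩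

/-- W-averaged positive definite symmetric bilinear form -/
noncomputable def Bf (hS : IsPosSystem A Φ) (x y : ι → ℚ) : ℚ :=
  ∑ w ∈ Wfin hS, ∑ i, w x i * w y i

lemma Bf_symm (hS : IsPosSystem A Φ) (x y : ι → ℚ) : Bf hS x y = Bf hS y x := by
  unfold Bf
  refine Finset.sum_congr rfl fun w _ => Finset.sum_congr rfl fun i _ => mul_comm _ _

lemma Bf_add_left (hS : IsPosSystem A Φ) (x y z : ι → ℚ) :
    Bf hS (x + y) z = Bf hS x z + Bf hS y z := by
  unfold Bf
  rw [← Finset.sum_add_distrib]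
  refine Finset.sum_congr rfl fun w hw => ?_
  obtain ⟨L, rfl⟩ := mem_Wfin.mp hw
  rw [← Finset.sum_add_distrib]
  refine Finset.sum_congr rfl fun i _ => ?_
  rw [wp_add A L x y]
  simp [add_mul]

lemma Bf_smul_left (hS : IsPosSystem A Φ) (c : ℚ) (x z : ι → ℚ) :
    Bf hS (c • x) z = c * Bf hS x z := by
  unfold Bf
  rw [Finset.mul_sum]
  refine Finset.sum_congr rfl fun w hw => ?_
  obtain ⟨L, rfl⟩ := mem_Wfin.mp hw
  rw [Finset.mul_sum]
  refine Finset.sum_congr rfl fun i _ => ?_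
  rw [wp_smul A L c x]
  simp [mul_assoc]

lemma Bf_zero_left (hS : IsPosSystem A Φ) (z : ι → ℚ) : Bf hS 0 z = 0 := by
  have h := Bf_smul_left hS 0 (0 : ι → ℚ) z
  rw [zero_smul] at h
  rw [h, zero_mul]

lemma Bf_neg_left (hS : IsPosSystem A Φ) (x z : ι → ℚ) :
    Bf hS (-x) z = - Bf hS x z := by
  have h := Bf_smul_left hS (-1) x z
  rw [neg_one_smul] at h
  rw [h]
  ring

lemma Bf_sub_left (hS : IsPosSystem A Φ) (x y z : ι → ℚ) :
    Bf hS (x - y) z = Bf hS x z - Bf hS y z := by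
  rw [sub_eq_add_neg, Bf_add_left, Bf_neg_left, sub_eq_add_neg]

lemma Bf_add_right (hS : IsPosSystem A Φ) (x y z : ι → ℚ) :
    Bf hS z (x + y) = Bf hS z x + Bf hS z y := by
  rw [Bf_symm, Bf_add_left, Bf_symm hS x z, Bf_symm hS y z]

lemma Bf_smul_right (hS : IsPosSystem A Φ) (c : ℚ) (x z : ι → ℚ) :
    Bf hS z (c • x) = c * Bf hS z x := by
  rw [Bf_symm, Bf_smul_left, Bf_symm hS x z]

lemma Bf_sub_right (hS : IsPosSystem A Φ) (x y z : ι → ℚ) :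
    Bf hS z (x - y) = Bf hS z x - Bf hS z y := by
  rw [Bf_symm, Bf_sub_left, Bf_symm hS x z, Bf_symm hS y z]

lemma Bf_nonneg_diag (hS : IsPosSystem A Φ) (x : ι → ℚ) : 0 ≤ Bf hS x x := by
  unfold Bf
  refine Finset.sum_nonneg fun w _ => Finset.sum_nonneg fun i _ => mul_self_nonneg _

lemma Bf_pos (hS : IsPosSystem A Φ) {x : ι → ℚ} (hx : x ≠ 0) : 0 < Bf hS x x := by
  unfold Bf
  refine Finset.sum_pos' (fun w _ => Finset.sum_nonneg fun i _ => mul_self_nonneg _)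
    ⟨id, id_mem_Wfin hS, ?_⟩
  simp only [id_eq]
  have : ∃ i, x i ≠ 0 := by
    by_contra hc
    push_neg at hc
    exact hx (funext hc)
  obtain ⟨i, hi⟩ := this
  refine Finset.sum_pos' (fun k _ => mul_self_nonneg _) ⟨i, Finset.mem_univ i, ?_⟩
  exact mul_self_pos.mpr hi

lemma Bf_eq_zero_iff (hS : IsPosSystem A Φ) {x : ι → ℚ} (h : Bf hS x x = 0) : x = 0 := by
  by_contra hx
  exact absurd h (ne_of_gt (Bf_pos hS hx))

lemma Bf_invariant (hS : IsPosSystem A Φ) (L : List ι) (x y : ι → ℚ) :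
    Bf hS (wp A L x) (wp A L y) = Bf hS x y := by
  unfold Bf
  refine Finset.sum_nbij' (fun w => w ∘ wp A L) (fun w => w ∘ wp A L.reverse)
    ?_ ?_ ?_ ?_ ?_
  · intro w hw
    exact mem_Wfin.mpr (by
      obtain ⟨L1, rfl⟩ := mem_Wfin.mp hw
      exact ⟨L1 ++ L, (wp_append A L1 L).symm⟩)
  · intro w hw
    exact mem_Wfin.mpr (by
      obtain ⟨L1, rfl⟩ := mem_Wfin.mp hw
      exact ⟨L1 ++ L.reverse, (wp_append A L1 L.reverse).symm⟩)
  · intro w hw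
    funext v
    exact congrArg w (wp_wp_rev A hS.cartan_diag L v)
  · intro w hw
    funext v
    exact congrArg w (wp_rev_wp A hS.cartan_diag L v)
  · intro w hw
    rfl
end WtBform
section WtPairB
open Finset
set_option linter.unusedSectionVars false
set_option linter.unusedVariables false
set_option maxHeartbeats 800000

variable {ι : Type*} [Fintype ι] [DecidableEq ι]
variable {A : ι → ι → ℤ} {Φ : Set (ι → ℚ)}

lemma Bf_neg_right (hS : IsPosSystem A Φ) (x z : ι → ℚ) :
    Bf hS z (-x) = - Bf hS z x := by
  rw [Bf_symm, Bf_neg_left, Bf_symm hS x z]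

lemma Bf_single (hS : IsPosSystem A Φ) (x : ι → ℚ) (j : ι) :
    2 * Bf hS x (al j) = pairRt A x j * Bf hS (al j) (al j) := by
  have h := Bf_invariant hS [j] x (al j)
  have e1 : wp A [j] x = x - pairRt A x j • al j := rfl
  have e2 : wp A [j] (al j) = -al j := refl_al_self A hS.cartan_diag j
  rw [e1, e2, Bf_neg_right, Bf_sub_left, Bf_smul_left] at h
  linarith [h]

lemma Bf_jj_pos (hS : IsPosSystem A Φ) (j : ι) : 0 < Bf hS (al j) (al j) :=
  Bf_pos hS (al_ne_zero j)

lemma pair_pos_iff (hS : IsPosSystem A Φ) (x : ι → ℚ) (j : ι) :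
    0 < pairRt A x j ↔ 0 < Bf hS x (al j) := by
  have h := Bf_single hS x j
  have hj := Bf_jj_pos hS j
  constructor
  · intro hp; nlinarith
  · intro hb; nlinarith

lemma pair_neg_iff (hS : IsPosSystem A Φ) (x : ι → ℚ) (j : ι) :
    pairRt A x j < 0 ↔ Bf hS x (al j) < 0 := by
  have h := Bf_single hS x j
  have hj := Bf_jj_pos hS j
  constructor
  · intro hp; nlinarith
  · intro hb; nlinarith

lemma pair_nonneg_iff (hS : IsPosSystem A Φ) (x : ι → ℚ) (j : ι) :
    0 ≤ pairRt A x j ↔ 0 ≤ Bf hS x (al j) := by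
  rw [← not_lt, ← not_lt, not_iff_not]
  exact pair_neg_iff hS x j

lemma pair_zero_iff (hS : IsPosSystem A Φ) (x : ι → ℚ) (j : ι) :
    pairRt A x j = 0 ↔ Bf hS x (al j) = 0 := by
  constructor
  · intro h
    have := Bf_single hS x j
    rw [h] at this; linarith
  · intro h
    have hh := Bf_single hS x j
    have hj := Bf_jj_pos hS j
    rw [h] at hh
    have := mul_eq_zero.mp (by linarith : pairRt A x j * Bf hS (al j) (al j) = 0)
    rcases this with h1 | h1
    · exact h1
    · exact absurd h1 (ne_of_gt hj)

lemma Bf_expand_left (hS : IsPosSystem A Φ) (x y : ι → ℚ) :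
    Bf hS x y = ∑ i, x i * Bf hS (al i) y := by
  have hlin : IsLinearMap ℚ (fun v => Bf hS v y) :=
    ⟨fun a b => Bf_add_left hS a b y, fun c v => Bf_smul_left hS c v y⟩
  have h := map_sum (IsLinearMap.mk' _ hlin) (fun i => x i • al i) Finset.univ
  simp only [IsLinearMap.mk'_apply, single_decomp] at h
  rw [h]
  refine Finset.sum_congr rfl fun i _ => ?_
  rw [Bf_smul_left]

lemma Bf_dom_nonneg (hS : IsPosSystem A Φ) {u v : ι → ℚ}
    (hu : ∀ i, 0 ≤ u i) (hv : IsDom A v) : 0 ≤ Bf hS u v := by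
  rw [Bf_expand_left]
  refine Finset.sum_nonneg fun i _ => mul_nonneg (hu i) ?_
  rw [Bf_symm]
  exact (pair_nonneg_iff hS v i).mp (hv i)

/-- Lemma L: a nonzero nonnegative combination of simple roots has a
positive coroot pairing somewhere on its support. -/
lemma lemma_L (hS : IsPosSystem A Φ) {ν : ι → ℚ} (h0 : ν ≠ 0)
    (hnn : ∀ i, 0 ≤ ν i) : ∃ j, 0 < ν j ∧ 0 < pairRt A ν j := by
  have hp := Bf_pos hS h0
  rw [Bf_expand_left] at hp
  have : ∃ j ∈ Finset.univ, 0 < ν j * Bf hS (al j) ν := by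
    by_contra hc
    push_neg at hc
    have : ∑ i, ν i * Bf hS (al i) ν ≤ 0 :=
      Finset.sum_nonpos fun i hi => hc i hi
    linarith
  obtain ⟨j, _, hj⟩ := this
  have hBj : 0 < Bf hS (al j) ν := by
    rcases lt_or_ge 0 (Bf hS (al j) ν) with h | h
    · exact h
    · nlinarith [hnn j]
  have hνj : 0 < ν j := by nlinarith [hnn j]
  refine ⟨j, hνj, ?_⟩
  rw [pair_pos_iff hS, Bf_symm]
  exact hBj

/-- total height functional -/
def htQ (x : ι → ℚ) : ℚ := ∑ i, x i

lemma htQ_nonneg {x : ι → ℚ} (h : ∀ i, 0 ≤ x i) : 0 ≤ htQ x :=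
  Finset.sum_nonneg fun i _ => h i

lemma htQ_coord_le {x : ι → ℚ} (h : ∀ i, 0 ≤ x i) (k : ι) : x k ≤ htQ x :=
  Finset.single_le_sum (fun i _ => h i) (Finset.mem_univ k)

lemma htQ_eq_zero {x : ι → ℚ} (h : ∀ i, 0 ≤ x i) (hz : htQ x ≤ 0) : x = 0 := by
  funext k
  have h1 := htQ_coord_le h k
  have h2 := h k
  have : x k = 0 := le_antisymm (by linarith) h2
  simpa using this

lemma htQ_sub (x y : ι → ℚ) : htQ (x - y) = htQ x - htQ y := by
  unfold htQ
  simp [Finset.sum_sub_distrib]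

lemma htQ_add (x y : ι → ℚ) : htQ (x + y) = htQ x + htQ y := by
  unfold htQ
  simp [Finset.sum_add_distrib]

lemma htQ_smul (c : ℚ) (x : ι → ℚ) : htQ (c • x) = c * htQ x := by
  unfold htQ
  simp [Finset.mul_sum]

lemma htQ_al (j : ι) : htQ (al j) = 1 := by
  unfold htQ
  rw [Finset.sum_eq_single j]
  · exact al_self j
  · intro b _ hb; exact al_ne j b hb
  · intro h; exact absurd (Finset.mem_univ j) h

lemma natCoords_ge_one {x : ι → ℚ} (h : NatCoords x) {i : ι} (hi : 0 < x i) :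
    1 ≤ x i := by
  obtain ⟨m, hm⟩ := h i
  rw [hm] at hi ⊢
  have hmpos : 0 < m := by exact_mod_cast hi
  exact_mod_cast hmpos

lemma natCoords_half_ge_one {x : ι → ℚ} (h : NatCoords x) {i : ι}
    (hi : (1:ℚ)/2 ≤ x i) : 1 ≤ x i := by
  have : 0 < x i := by linarith
  exact natCoords_ge_one h this

lemma natCoords_sub {x y : ι → ℚ} (hx : NatCoords x) (hy : NatCoords y)
    (h : ∀ i, y i ≤ x i) : NatCoords (x - y) := by
  intro i
  obtain ⟨m, hm⟩ := hx i
  obtain ⟨n, hn⟩ := hy i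
  have hle : n ≤ m := by
    have := h i
    rw [hm, hn] at this
    exact_mod_cast this
  refine ⟨m - n, ?_⟩
  simp only [Pi.sub_apply, hm, hn]
  push_cast [Nat.cast_sub hle]
  ring

lemma natCoords_add {x y : ι → ℚ} (hx : NatCoords x) (hy : NatCoords y) :
    NatCoords (x + y) := by
  intro i
  obtain ⟨m, hm⟩ := hx i
  obtain ⟨n, hn⟩ := hy i
  exact ⟨m + n, by simp [hm, hn]⟩

lemma htQ_pos_of_P {hS : IsPosSystem A Φ} {β : ι → ℚ} (h : β ∈ Pfin hS) :
    1 ≤ htQ β := by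
  have hnz := (mem_Pfin.mp h).2
  have hnn := Pfin_nonneg h
  have : ∃ i, 0 < β i := by
    by_contra hc
    push_neg at hc
    apply hnz
    funext i
    have := le_antisymm (hc i) (hnn i)
    simpa using this
  obtain ⟨i, hi⟩ := this
  calc (1:ℚ) ≤ β i := natCoords_ge_one (Pfin_nat h) hi
    _ ≤ htQ β := htQ_coord_le hnn i

end WtPairB
section WtDeletion
open Finset
set_option linter.unusedSectionVars false
set_option linter.unusedVariables false
set_option maxHeartbeats 1600000

variable {ι : Type*} [Fintype ι] [DecidableEq ι]
variable {A : ι → ι → ℤ} {Φ : Set (ι → ℚ)}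

lemma pair_transport (hS : IsPosSystem A Φ) (L : List ι) (a b : ι)
    (hab : wp A L (al a) = al b) (x : ι → ℚ) :
    pairRt A (wp A L x) b = pairRt A x a := by
  have h1 : Bf hS (wp A L x) (al b) = Bf hS x (al a) := by
    rw [← hab, Bf_invariant]
  have h2 : Bf hS (al b) (al b) = Bf hS (al a) (al a) := by
    rw [← hab, Bf_invariant]
  have e1 := Bf_single hS (wp A L x) b
  have e2 := Bf_single hS x a
  have haa := Bf_jj_pos hS a
  rw [h1, h2] at e1
  have key : pairRt A (wp A L x) b * Bf hS (al a) (al a)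
      = pairRt A x a * Bf hS (al a) (al a) := by linarith
  exact mul_right_cancel₀ (ne_of_gt haa) key

lemma conj_refl (hS : IsPosSystem A Φ) (L : List ι) (a b : ι)
    (hab : wp A L (al a) = al b) (x : ι → ℚ) :
    reflFun A b (wp A L x) = wp A L (reflFun A a x) := by
  rw [refl_apply, refl_apply, wp_sub, wp_smul, hab, pair_transport hS L a b hab]

private lemma flip_scan (g : ℕ → Prop) :
    ∀ m, ¬ g 0 → g m → ∃ t, t < m ∧ ¬ g t ∧ g (t + 1) := by
  intro m
  induction m with
  | zero => intro h0 hm; exact absurd hm h0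
  | succ m ih =>
      intro h0 hm
      by_cases hgm : g m
      · obtain ⟨t, ht, h⟩ := ih h0 hgm
        exact ⟨t, by omega, h⟩
      · exact ⟨m, by omega, hgm, hm⟩

lemma wp_singleton (a : ι) (x : ι → ℚ) : wp A [a] x = reflFun A a x := rfl

lemma deletion (hS : IsPosSystem A Φ) :
    ∀ n (L : List ι), L.length ≤ n →
      (∀ β ∈ Pfin hS, wp A L β ∈ Pfin hS) → ∀ x, wp A L x = x := by
  intro n
  induction n using Nat.strong_induction_on with
  | _ n ih =>
    intro L hlen hmaps x
    rcases List.eq_nil_or_concat L with rfl | ⟨L₀, a, rfl⟩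
    · rfl
    · rw [List.concat_eq_append] at hlen hmaps ⊢
      have hlenL : L₀.length + 1 ≤ n := by simpa using hlen
      have hwL : ∀ y, wp A (L₀ ++ [a]) y = wp A L₀ (reflFun A a y) := by
        intro y
        rw [wp_append]
        rfl
      have hNeg : wp A L₀ (al a) ∈ Nfin hS := by
        have h1 : wp A L₀ (al a) = - wp A (L₀ ++ [a]) (al a) := by
          rw [hwL (al a), refl_al_self A hS.cartan_diag a, wp_neg, neg_neg]
        rw [h1]
        exact mem_Nfin.mpr (by simpa using hmaps (al a) (al_mem_Pfin hS a))
      set γ : ℕ → (ι → ℚ) := fun t => wp A (L₀.drop t) (al a) with hγ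
      have hg0 : ¬ (γ 0 ∈ Pfin hS) := by
        intro hc
        refine P_disj_N hc ?_
        simpa [hγ] using hNeg
      have hglen : γ L₀.length ∈ Pfin hS := by
        simp only [hγ, List.drop_length, wp_nil, id_eq]
        exact al_mem_Pfin hS a
      obtain ⟨t, ht, hnotP, hP⟩ :=
        flip_scan (fun t => γ t ∈ Pfin hS) L₀.length hg0 hglen
      have e : L₀.drop t = L₀[t] :: L₀.drop (t + 1) := List.drop_eq_getElem_cons ht
      set k := L₀[t] with hk
      have hrel : γ t = reflFun A k (γ (t + 1)) := by
        simp only [hγ, e, wp_cons, Function.comp_apply]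
        rfl
      have hflip : γ (t + 1) = al k := by
        by_contra hne
        exact hnotP (by rw [hrel]; exact refl_mem_P k hP hne)
      have hu : wp A (L₀.drop (t + 1)) (al a) = al k := hflip
      have hconj := conj_refl hS (L₀.drop (t + 1)) a k hu
      have heq : ∀ y, wp A (L₀ ++ [a]) y = wp A (L₀.take t ++ L₀.drop (t + 1)) y := by
        intro y
        rw [hwL y, wp_append]
        have h2 : wp A L₀ (reflFun A a y)
            = wp A (L₀.take t) (wp A (L₀.drop t) (reflFun A a y)) := by
          conv_lhs => rw [← List.take_append_drop t L₀]
          rw [wp_append]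
          rfl
        rw [h2]
        have h3 : wp A (L₀.drop t) (reflFun A a y)
            = reflFun A k (wp A (L₀.drop (t + 1)) (reflFun A a y)) := by
          rw [e, wp_cons]
          rfl
        rw [h3, hconj (reflFun A a y), refl_invol A hS.cartan_diag]
        rfl
      have hlen' : (L₀.take t ++ L₀.drop (t + 1)).length ≤ n - 1 := by
        rw [List.length_append, List.length_take, List.length_drop]
        omega
      have hn1 : n - 1 < n := by omega
      have hmaps' : ∀ β ∈ Pfin hS, wp A (L₀.take t ++ L₀.drop (t + 1)) β ∈ Pfin hS := by
        intro β hβ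
        rw [← heq β]
        exact hmaps β hβ
      rw [heq x]
      exact ih (n - 1) hn1 _ hlen' hmaps' x

end WtDeletion
section WtUnique
open Finset
set_option linter.unusedSectionVars false
set_option linter.unusedVariables false
set_option maxHeartbeats 1600000

variable {ι : Type*} [Fintype ι] [DecidableEq ι]
variable {A : ι → ι → ℤ} {Φ : Set (ι → ℚ)}

lemma neg_al_not_P (hS : IsPosSystem A Φ) (j : ι) : -al j ∉ Pfin hS := by
  intro h
  have := Pfin_nonneg h j
  simp [al_self] at this
  linarith

noncomputable def invSet (hS : IsPosSystem A Φ) (L : List ι) : Finset (ι → ℚ) :=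
  (Pfin hS).filter (fun β => wp A L β ∈ Nfin hS)

lemma wp_concat (L : List ι) (j : ι) (x : ι → ℚ) :
    wp A (L ++ [j]) x = wp A L (reflFun A j x) := by
  rw [wp_append]
  rfl

lemma inv_drop (hS : IsPosSystem A Φ) (L : List ι) (j : ι)
    (hj : wp A L (al j) ∈ Nfin hS) :
    (invSet hS (L ++ [j])).card + 1 = (invSet hS L).card := by
  classical
  have hset : invSet hS (L ++ [j])
      = ((invSet hS L).erase (al j)).image (reflFun A j) := by
    ext β
    constructor
    · intro hβ
      obtain ⟨hβP, hβN⟩ := Finset.mem_filter.mp hβ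
      rw [wp_concat] at hβN
      have hne : β ≠ al j := by
        rintro rfl
        rw [refl_al_self A hS.cartan_diag, wp_neg] at hβN
        exact P_disj_N (mem_Nfin.mp hj) hβN
      have h1 : reflFun A j β ∈ Pfin hS := refl_mem_P j hβP hne
      have h2 : reflFun A j β ∈ invSet hS L := by
        exact Finset.mem_filter.mpr ⟨h1, hβN⟩
      refine Finset.mem_image.mpr ⟨reflFun A j β, ?_, ?_⟩
      · refine Finset.mem_erase.mpr ⟨?_, h2⟩
        intro heq
        have : β = -al j := by
          have := congrArg (reflFun A j) heq
          rwa [refl_invol A hS.cartan_diag, refl_al_self A hS.cartan_diag] at this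
        rw [this] at hβP
        exact neg_al_not_P hS j hβP
      · exact refl_invol A hS.cartan_diag j β
    · intro hβ
      obtain ⟨δ, hδ, rfl⟩ := Finset.mem_image.mp hβ
      obtain ⟨hδne, hδI⟩ := Finset.mem_erase.mp hδ
      obtain ⟨hδP, hδN⟩ := Finset.mem_filter.mp hδI
      refine Finset.mem_filter.mpr ⟨refl_mem_P j hδP hδne, ?_⟩
      rw [wp_concat, refl_invol A hS.cartan_diag]
      exact hδN
  rw [hset]
  have hinj : Set.InjOn (reflFun A j) ((invSet hS L).erase (al j)) := by
    intro u hu v hv huv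
    have := congrArg (reflFun A j) huv
    rwa [refl_invol A hS.cartan_diag, refl_invol A hS.cartan_diag] at this
  rw [Finset.card_image_of_injOn hinj]
  have hmem : al j ∈ invSet hS L :=
    Finset.mem_filter.mpr ⟨al_mem_Pfin hS j, hj⟩
  rw [Finset.card_erase_of_mem hmem]
  have : 1 ≤ (invSet hS L).card := Finset.card_pos.mpr ⟨al j, hmem⟩
  omega

lemma wp_coord_nonneg (hS : IsPosSystem A Φ) (L : List ι)
    (hall : ∀ j, wp A L (al j) ∈ Pfin hS) {β : ι → ℚ} (hβ : ∀ i, 0 ≤ β i) (m : ι) :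
    0 ≤ wp A L β m := by
  rw [wp_eval]
  rw [Finset.sum_apply]
  refine Finset.sum_nonneg fun i _ => ?_
  simp only [Pi.smul_apply, smul_eq_mul]
  exact mul_nonneg (hβ i) (Pfin_nonneg (hall i) m)

lemma dom_unique_base (hS : IsPosSystem A Φ) (L : List ι)
    (hall : ∀ j, wp A L (al j) ∈ Pfin hS) (x : ι → ℚ) : wp A L x = x := by
  have hmaps : ∀ β ∈ Pfin hS, wp A L β ∈ Pfin hS := by
    intro β hβ
    have h1 : wp A L β ∈ PNfin hS := wp_mem_PN L (mem_PN_of_P hβ)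
    exact sign_lemma h1 (wp_coord_nonneg hS L hall (Pfin_nonneg hβ))
  exact deletion hS L.length L le_rfl hmaps x

lemma dom_unique (hS : IsPosSystem A Φ) :
    ∀ n (L : List ι), (invSet hS L).card ≤ n →
    ∀ x z : ι → ℚ, IsDom A x → IsDom A z → wp A L x = z → x = z := by
  intro n
  induction n with
  | zero =>
      intro L hc x z hx hz hw
      have hall : ∀ j, wp A L (al j) ∈ Pfin hS := by
        intro j
        have hPN : wp A L (al j) ∈ PNfin hS := wp_mem_PN L (al_mem_PN hS j)
        rcases Finset.mem_union.mp hPN with h | h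
        · exact h
        · exfalso
          have : al j ∈ invSet hS L := Finset.mem_filter.mpr ⟨al_mem_Pfin hS j, h⟩
          have := Finset.card_pos.mpr ⟨al j, this⟩
          omega
      rw [← hw, dom_unique_base hS L hall x]
  | succ n ih =>
      intro L hc x z hx hz hw
      by_cases hall : ∀ j, wp A L (al j) ∉ Nfin hS
      · have hall' : ∀ j, wp A L (al j) ∈ Pfin hS := by
          intro j
          have hPN : wp A L (al j) ∈ PNfin hS := wp_mem_PN L (al_mem_PN hS j)
          rcases Finset.mem_union.mp hPN with h | h
          · exact h
          · exact absurd h (hall j)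
        rw [← hw, dom_unique_base hS L hall' x]
      · push_neg at hall
        obtain ⟨j, hj⟩ := hall
        -- x is fixed by the reflection j
        have hpx : pairRt A x j = 0 := by
          have h1 : 0 ≤ Bf hS x (al j) := (pair_nonneg_iff hS x j).mp (hx j)
          have h2 : Bf hS x (al j) ≤ 0 := by
            have hP : - wp A L (al j) ∈ Pfin hS := mem_Nfin.mp hj
            have h3 : 0 ≤ Bf hS (- wp A L (al j)) z :=
              Bf_dom_nonneg hS (Pfin_nonneg hP) hz
            rw [Bf_neg_left] at h3
            have e1 : Bf hS x (al j) = Bf hS (wp A L x) (wp A L (al j)) :=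
              (Bf_invariant hS L x (al j)).symm
            rw [hw] at e1
            rw [e1, Bf_symm]
            linarith
          exact (pair_zero_iff hS x j).mpr (le_antisymm h2 h1)
        have hfix : reflFun A j x = x := by
          rw [refl_apply, hpx, zero_smul, sub_zero]
        have hw' : wp A (L ++ [j]) x = z := by
          rw [wp_concat, hfix]
          exact hw
        have hcard : (invSet hS (L ++ [j])).card ≤ n := by
          have := inv_drop hS L j hj
          omega
        exact ih (L ++ [j]) hcard x z hx hz hw'

end WtUnique
section WtString
open Finset
set_option linter.unusedSectionVars false
set_option linter.unusedVariables false
set_option maxHeartbeats 1600000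

variable {ι : Type*} [Fintype ι] [DecidableEq ι]
variable {A : ι → ι → ℤ} {Φ : Set (ι → ℚ)}

/-- real (orbit-of-simple) positive roots -/
def PmP (hS : IsPosSystem A Φ) (β : ι → ℚ) : Prop :=
  β ∈ Pfin hS ∧ ∃ (L : List ι) (i : ι), β = wp A L (al i)

lemma al_Pm (hS : IsPosSystem A Φ) (i : ι) : PmP hS (al i) :=
  ⟨al_mem_Pfin hS i, [], i, rfl⟩

lemma refl_Pm (hS : IsPosSystem A Φ) {β : ι → ℚ} (hβ : PmP hS β) (k : ι)
    (hne : β ≠ al k) : PmP hS (reflFun A k β) := by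
  obtain ⟨hP, L, i, rfl⟩ := hβ
  exact ⟨refl_mem_P k hP hne, k :: L, i, rfl⟩

lemma sβ_formula (hS : IsPosSystem A Φ) (L : List ι) (i : ι) (x : ι → ℚ) :
    wp A (L ++ i :: L.reverse) x
      = x - pairRt A (wp A L.reverse x) i • wp A L (al i) := by
  rw [wp_append, Function.comp_apply, wp_cons]
  change wp A L (reflFun A i (wp A L.reverse x)) = _
  rw [refl_apply, wp_sub, wp_smul, wp_wp_rev A hS.cartan_diag]

lemma sβ_link (hS : IsPosSystem A Φ) (L : List ι) (i : ι) (x : ι → ℚ) :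
    2 * Bf hS x (wp A L (al i))
      = pairRt A (wp A L.reverse x) i * Bf hS (wp A L (al i)) (wp A L (al i)) := by
  set β := wp A L (al i) with hβ
  set c := pairRt A (wp A L.reverse x) i with hc
  have hself : wp A (L ++ i :: L.reverse) β = -β := by
    rw [sβ_formula hS]
    have : pairRt A (wp A L.reverse β) i = 2 := by
      rw [hβ, wp_rev_wp A hS.cartan_diag, pair_single, hS.cartan_diag i]
      norm_num
    rw [this]
    module
  have hx : wp A (L ++ i :: L.reverse) x = x - c • β := sβ_formula hS L i x
  have hinv := Bf_invariant hS (L ++ i :: L.reverse) x β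
  rw [hx, hself, Bf_neg_right, Bf_sub_left, Bf_smul_left] at hinv
  linarith

/-- The string lemma: adding a simple root to a real positive root
when the pairing is negative. -/
lemma string_lemma (hS : IsPosSystem A Φ) {β : ι → ℚ} (hβ : PmP hS β) (k : ι)
    (hneg : pairRt A β k < 0) : PmP hS (β + al k) := by
  have hβP := hβ.1
  have hne : β ≠ al k := by
    rintro rfl
    rw [pair_single, hS.cartan_diag k] at hneg
    norm_num at hneg
  obtain ⟨hP, L, i, hrep⟩ := hβ
  -- the two integers
  obtain ⟨mp, hmp⟩ := pair_natCoords_int A β (Pfin_nat hβP) k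
  have hintk : IsIntegralWt A (al k) := fun j => ⟨A k j, pair_single A k j⟩
  obtain ⟨mc, hmc⟩ := wp_integral A L.reverse (al k) hintk i
  set p : ℚ := pairRt A β k with hp
  set c : ℚ := pairRt A (wp A L.reverse (al k)) i with hcc
  have hD : 0 < Bf hS β β := Bf_pos hS (mem_Pfin.mp hβP).2
  have hE : 0 < Bf hS (al k) (al k) := Bf_jj_pos hS k
  have hF2 : 2 * Bf hS β (al k) = p * Bf hS (al k) (al k) := Bf_single hS β k
  have hF1 : 2 * Bf hS (al k) β = c * Bf hS β β := by
    have := sβ_link hS L i (al k)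
    rwa [← hrep] at this
  have hFneg : Bf hS β (al k) < 0 := (pair_neg_iff hS β k).mp hneg
  have hcneg : c < 0 := by
    rw [Bf_symm] at hF1
    nlinarith
  -- strict Cauchy-Schwarz
  have hCS : Bf hS β (al k) * Bf hS β (al k) < Bf hS β β * Bf hS (al k) (al k) := by
    set D := Bf hS β β
    set E := Bf hS (al k) (al k)
    set F := Bf hS β (al k)
    have hv : 0 ≤ Bf hS (D • al k - F • β) (D • al k - F • β) := Bf_nonneg_diag hS _
    have hexp : Bf hS (D • al k - F • β) (D • al k - F • β) = D * (D * E - F * F) := by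
      simp only [Bf_sub_left, Bf_sub_right, Bf_smul_left, Bf_smul_right]
      rw [Bf_symm hS (al k) β]
      ring
    rw [hexp] at hv
    have h1 : 0 ≤ D * E - F * F := by
      by_contra hcon
      push_neg at hcon
      nlinarith
    rcases eq_or_lt_of_le h1 with heq | hlt
    · exfalso
      have hzero : D • al k - F • β = 0 := by
        apply Bf_eq_zero_iff hS
        rw [hexp, ← heq]
        ring
      have hk1 : D * 1 - F * β k = 0 := by
        have := congrFun hzero k
        simpa [al_self, Pi.sub_apply, Pi.smul_apply] using this
      have hβk : 0 ≤ β k := Pfin_nonneg hβP k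
      nlinarith
    · linarith
  -- p * c < 4
  have hpc : p * c < 4 := by
    have e1 : p * Bf hS (al k) (al k) * (c * Bf hS β β)
        = 4 * (Bf hS β (al k) * Bf hS β (al k)) := by
      rw [← hF2, ← hF1, Bf_symm hS (al k) β]
      ring
    nlinarith
  have hpneg : p < 0 := hneg
  -- integer case analysis
  have hmpneg : mp ≤ -1 := by
    have h0 : (mp : ℚ) < 0 := by rw [← hmp]; exact hneg
    have h1 : mp < 0 := by exact_mod_cast h0
    omega
  have hmcneg : mc ≤ -1 := by
    have h0 : (mc : ℚ) < 0 := by rw [← hmc]; exact hcneg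
    have h1 : mc < 0 := by exact_mod_cast h0
    omega
  have hmpc : mp * mc ≤ 3 := by
    have : (mp * mc : ℚ) < 4 := by
      rw [← hmp, ← hmc]
      exact hpc

    have : (mp * mc : ℤ) < 4 := by exact_mod_cast this
    omega
  have hcase : mp = -1 ∨ mc = -1 := by
    by_contra hcon
    push_neg at hcon
    obtain ⟨h1, h2⟩ := hcon
    have h1' : mp ≤ -2 := by omega
    have h2' : mc ≤ -2 := by omega
    nlinarith
  rcases hcase with hcase | hcase
  · -- simple reflection does it
    have : reflFun A k β = β + al k := by
      rw [refl_apply, ← hp]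
      have : p = -1 := by rw [hmp, hcase]; norm_num
      rw [this]
      module
    rw [← this]
    exact refl_Pm hS ⟨hP, L, i, hrep⟩ k hne
  · -- reflection in β does it
    have hsb : wp A (L ++ i :: L.reverse) (al k) = al k + β := by
      rw [sβ_formula hS, ← hrep, ← hcc]
      have : c = -1 := by rw [hmc, hcase]; norm_num
      rw [this]
      module
    have hPN : al k + β ∈ PNfin hS := by
      rw [← hsb]
      exact wp_mem_PN _ (al_mem_PN hS k)
    have hnn : ∀ m, 0 ≤ (al k + β) m := by
      intro m
      have h1 := Pfin_nonneg hβP m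
      have h2 : (0:ℚ) ≤ al k m := by
        rw [al_apply]
        split <;> norm_num
      simp only [Pi.add_apply]
      linarith
    have hmem : al k + β ∈ Pfin hS := sign_lemma hPN hnn
    have : β + al k = al k + β := add_comm _ _
    rw [this]
    exact ⟨hmem, L ++ i :: L.reverse, k, hsb.symm⟩

end WtString
section WtGrow
open Finset
set_option linter.unusedSectionVars false
set_option linter.unusedVariables false
set_option maxHeartbeats 1600000

variable {ι : Type*} [Fintype ι] [DecidableEq ι]
variable {A : ι → ι → ℤ} {Φ : Set (ι → ℚ)}

lemma mu_int {lam μ : ι → ℚ} (hlamint : IsIntegralWt A lam)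
    (hν : NatCoords (lam - μ)) : IsIntegralWt A μ := by
  intro j
  obtain ⟨a, ha⟩ := hlamint j
  obtain ⟨b, hb⟩ := pair_natCoords_int A _ hν j
  refine ⟨a - b, ?_⟩
  have e : μ = lam - (lam - μ) := by ring
  rw [e, pair_sub, ha, hb]
  push_cast
  ring

lemma pair_le_twice (hS : IsPosSystem A Φ) {x : ι → ℚ} (hx : ∀ i, 0 ≤ x i) (k : ι) :
    pairRt A x k ≤ 2 * x k := by
  unfold pairRt
  rw [← Finset.add_sum_erase _ _ (Finset.mem_univ k)]
  have h1 : x k * (A k k : ℚ) = 2 * x k := by rw [hS.cartan_diag k]; push_cast; ring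
  rw [h1]
  have h2 : ∑ i ∈ Finset.univ.erase k, x i * (A i k : ℚ) ≤ 0 := by
    refine Finset.sum_nonpos fun i hi => ?_
    have hik : i ≠ k := (Finset.mem_erase.mp hi).1
    have hA : (A i k : ℚ) ≤ 0 := by exact_mod_cast hS.cartan_offdiag i k hik
    exact mul_nonpos_iff.mpr (Or.inl ⟨hx i, hA⟩)
  linarith

lemma nonneg_coords_sub {x y : ι → ℚ} (h : ∀ i, y i ≤ x i) (i : ι) :
    0 ≤ (x - y) i := by
  simp only [Pi.sub_apply]
  linarith [h i]

lemma al_nonneg (k m : ι) : (0:ℚ) ≤ al k m := by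
  rw [al_apply]
  split <;> norm_num

/-- one step of the growing loop -/
lemma grow_step (hS : IsPosSystem A Φ) {lam μ : ι → ℚ}
    (hlamdom : IsDom A lam) (hlamint : IsIntegralWt A lam)
    (hμdom : IsDom A μ) (hν : NatCoords (lam - μ))
    {β : ι → ℚ} (hβ : PmP hS β) (hle : ∀ m, β m ≤ (lam - μ) m)
    (hnotdom : ¬ IsDom A (μ + β)) :
    ∃ k, PmP hS (β + al k) ∧ (∀ m, (β + al k) m ≤ (lam - μ) m) ∧
      (1:ℚ) ≤ (lam - μ - β) k := by
  have hμint : IsIntegralWt A μ := mu_int hlamint hν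
  unfold IsDom at hnotdom
  push_neg at hnotdom
  obtain ⟨k, hk⟩ := hnotdom
  have hβk : pairRt A β k < 0 := by
    have h1 := hμdom k
    have e := pair_add A μ β k
    linarith
  have hstring : PmP hS (β + al k) := string_lemma hS hβ k hβk
  -- the pairing of μ + β at k is an integer ≤ -1
  obtain ⟨mb, hmb⟩ := pair_natCoords_int A β (Pfin_nat hβ.1) k
  obtain ⟨ma, hma⟩ := hμint k
  have hsum : pairRt A (μ + β) k ≤ -1 := by
    rw [pair_add, hma, hmb]
    have h0 : ((ma + mb : ℤ) : ℚ) < 0 := by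
      push_cast
      rw [← hma, ← hmb]
      linarith [pair_add A μ β k]
    have h1 : ma + mb < 0 := by exact_mod_cast h0
    have h2 : ma + mb ≤ -1 := by omega
    have : ((ma + mb : ℤ) : ℚ) ≤ -1 := by exact_mod_cast h2
    push_cast at this ⊢
    linarith
  -- coordinate estimate
  have hDnat : NatCoords (lam - μ - β) := by
    have := natCoords_sub hν (Pfin_nat hβ.1) hle
    exact this
  have hDnn : ∀ m, 0 ≤ (lam - μ - β) m := fun m => natCoords_nonneg hDnat m
  have hpairD : (1:ℚ) ≤ pairRt A (lam - μ - β) k := by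
    have e1 : lam - μ - β = lam - (μ + β) := by ring
    rw [e1, pair_sub]
    have := hlamdom k
    linarith
  have hDk : (1:ℚ) ≤ (lam - μ - β) k := by
    have h2 := pair_le_twice hS hDnn k
    exact natCoords_half_ge_one hDnat (by linarith)
  refine ⟨k, hstring, ?_, hDk⟩
  intro m
  by_cases hm : m = k
  · subst hm
    have h9 := hDk
    simp only [Pi.sub_apply] at h9
    simp only [Pi.add_apply, al_self, Pi.sub_apply]
    linarith
  · simp only [Pi.add_apply, al_ne k m hm]
    have := hle m
    linarith

/-- The growing loop: from a real positive root below `ν = lam - μ`,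
grow to one with `μ + β` dominant, staying below `ν`. -/
lemma grow (hS : IsPosSystem A Φ) {lam μ : ι → ℚ}
    (hlamdom : IsDom A lam) (hlamint : IsIntegralWt A lam)
    (hμdom : IsDom A μ) (hν : NatCoords (lam - μ)) :
    ∀ (n : ℕ) (β : ι → ℚ), PmP hS β → (∀ m, β m ≤ (lam - μ) m) →
      htQ (lam - μ - β) ≤ n →
      ∃ β', PmP hS β' ∧ (∀ m, β m ≤ β' m) ∧ (∀ m, β' m ≤ (lam - μ) m) ∧
        IsDom A (μ + β') := by
  intro n
  induction n with
  | zero =>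
      intro β hβ hle hht
      by_cases hdom : IsDom A (μ + β)
      · exact ⟨β, hβ, fun m => le_refl _, hle, hdom⟩
      · exfalso
        obtain ⟨k, _, _, hk3⟩ := grow_step hS hlamdom hlamint hμdom hν hβ hle hdom
        have hDnat : NatCoords (lam - μ - β) := natCoords_sub hν (Pfin_nat hβ.1) hle
        have hDnn : ∀ m, 0 ≤ (lam - μ - β) m := fun m => natCoords_nonneg hDnat m
        have h2 := htQ_coord_le hDnn k
        simp only [Nat.cast_zero] at hht
        linarith
  | succ n ih =>
      intro β hβ hle hht
      by_cases hdom : IsDom A (μ + β)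
      · exact ⟨β, hβ, fun m => le_refl _, hle, hdom⟩
      · obtain ⟨k, hk1, hk2, hk3⟩ := grow_step hS hlamdom hlamint hμdom hν hβ hle hdom
        have hht' : htQ (lam - μ - (β + al k)) ≤ n := by
          have e : lam - μ - (β + al k) = (lam - μ - β) - al k := by ring
          rw [e, htQ_sub, htQ_al]
          push_cast at hht
          linarith
        obtain ⟨β', h1, h2, h3, h4⟩ := ih (β + al k) hk1 hk2 hht'
        refine ⟨β', h1, ?_, h3, h4⟩
        intro m
        calc β m ≤ β m + al k m := by linarith [al_nonneg k m]
          _ = (β + al k) m := rfl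
          _ ≤ β' m := h2 m

/-- Piece 1: the dominant-dominant case of the main theorem. -/
lemma piece1 (hS : IsPosSystem A Φ) {lam : ι → ℚ}
    (hlamdom : IsDom A lam) (hlamint : IsIntegralWt A lam) :
    ∀ (n : ℕ) (μ : ι → ℚ), IsDom A μ → NatCoords (lam - μ) → htQ (lam - μ) ≤ n →
      (lam - μ) ∈ AddSubmonoid.closure (PhiPlusLam A Φ lam) := by
  intro n
  induction n with
  | zero =>
      intro μ hμdom hν hht
      have hnn : ∀ i, 0 ≤ (lam - μ) i := fun i => natCoords_nonneg hν i
      have h0 : lam - μ = 0 := htQ_eq_zero hnn (by exact_mod_cast hht)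
      rw [h0]
      exact AddSubmonoid.zero_mem _
  | succ n ih =>
      intro μ hμdom hν hht
      have hnn : ∀ i, 0 ≤ (lam - μ) i := fun i => natCoords_nonneg hν i
      by_cases h0 : lam - μ = 0
      · rw [h0]; exact AddSubmonoid.zero_mem _
      · obtain ⟨j, hj1, hj2⟩ := lemma_L hS h0 hnn
        have hlamj : 0 < pairRt A lam j := by
          have e : pairRt A lam j = pairRt A μ j + pairRt A (lam - μ) j := by
            rw [← pair_add]
            congr 1
            ring
          rw [e]
          have := hμdom j
          linarith
        have hνj : (1:ℚ) ≤ (lam - μ) j := natCoords_ge_one hν hj1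
        -- start the growing loop at the simple root j
        have hstart : ∀ m, al j m ≤ (lam - μ) m := by
          intro m
          by_cases hm : m = j
          · subst hm; rw [al_self]; exact hνj
          · rw [al_ne j m hm]; exact hnn m
        have hhtstart : htQ (lam - μ - al j) ≤ n := by
          rw [htQ_sub, htQ_al]
          push_cast at hht
          linarith
        obtain ⟨β', hβ'P, hβ'ge, hβ'le, hβ'dom⟩ :=
          grow hS hlamdom hlamint hμdom hν n (al j) (al_Pm hS j) hstart hhtstart
        have hβ'j : β' j ≠ 0 := by
          have h1 : (1:ℚ) ≤ β' j := by
            have := hβ'ge j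
            rw [al_self] at this
            linarith
          linarith
        have hβ'mem : β' ∈ PhiPlusLam A Φ lam :=
          ⟨(mem_Pfin.mp hβ'P.1).1, j, ne_of_gt hlamj, hβ'j⟩
        -- recurse
        have hν' : NatCoords (lam - (μ + β')) := by
          have e : lam - (μ + β') = (lam - μ) - β' := by ring
          rw [e]
          exact natCoords_sub hν (Pfin_nat hβ'P.1) hβ'le
        have hht' : htQ (lam - (μ + β')) ≤ n := by
          have e : lam - (μ + β') = (lam - μ) - β' := by ring
          rw [e, htQ_sub]
          have h1 : (1:ℚ) ≤ htQ β' := htQ_pos_of_P hβ'P.1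
          push_cast at hht
          linarith
        have hrec := ih (μ + β') hβ'dom hν' hht'
        have e : lam - μ = β' + (lam - (μ + β')) := by ring
        rw [e]
        exact AddSubmonoid.add_mem _ (AddSubmonoid.subset_closure hβ'mem) hrec

end WtGrow
section WtMain
open Finset
set_option linter.unusedSectionVars false
set_option linter.unusedVariables false
set_option maxHeartbeats 1600000

variable {ι : Type*} [Fintype ι] [DecidableEq ι]
variable {A : ι → ι → ℤ} {Φ : Set (ι → ℚ)}

lemma refl_sub (A : ι → ι → ℤ) (j : ι) (x y : ι → ℚ) :
    reflFun A j (x - y) = reflFun A j x - reflFun A j y := by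
  have h := refl_add A j (x - y) y
  rw [sub_add_cancel] at h
  rw [h]
  abel

lemma phiplus_refl (hS : IsPosSystem A Φ) {lam : ι → ℚ} (j : ι)
    (hj : pairRt A lam j = 0) {β : ι → ℚ} (hβ : β ∈ PhiPlusLam A Φ lam) :
    reflFun A j β ∈ PhiPlusLam A Φ lam := by
  obtain ⟨hΦm, i, hi1, hi2⟩ := hβ
  have hij : i ≠ j := by
    rintro rfl
    exact hi1 hj
  have hne : β ≠ al j := by
    rintro rfl
    exact hi2 (al_ne j i hij)
  refine ⟨hS.reflect_mem β hΦm j hne, i, hi1, ?_⟩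
  rw [refl_coord_ne A j β i hij]
  exact hi2

lemma closure_refl_map (hS : IsPosSystem A Φ) {lam : ι → ℚ} (j : ι)
    (hj : pairRt A lam j = 0) {v : ι → ℚ}
    (hv : v ∈ AddSubmonoid.closure (PhiPlusLam A Φ lam)) :
    reflFun A j v ∈ AddSubmonoid.closure (PhiPlusLam A Φ lam) := by
  induction hv using AddSubmonoid.closure_induction with
  | mem x hx => exact AddSubmonoid.subset_closure (phiplus_refl hS j hj hx)
  | zero =>
      rw [refl_zero]
      exact AddSubmonoid.zero_mem _
  | add x y hx hy ihx ihy =>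
      rw [refl_add]
      exact AddSubmonoid.add_mem _ ihx ihy

lemma weyl_word (A : ι → ι → ℤ) {w : Function.End (ι → ℚ)} (h : w ∈ Weyl A) :
    ∃ L : List ι, (w : Function.End (ι → ℚ)) = wp A L := by
  induction h using Submonoid.closure_induction with
  | mem f hf =>
      obtain ⟨j, rfl⟩ := hf
      exact ⟨[j], rfl⟩
  | one => exact ⟨[], rfl⟩
  | mul a b ha hb iha ihb =>
      obtain ⟨L1, h1⟩ := iha
      obtain ⟨L2, h2⟩ := ihb
      refine ⟨L1 ++ L2, ?_⟩
      rw [wp_append, ← h1, ← h2]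
      rfl

theorem weight_le_lam_in_PhiPlusLam'
    (A : ι → ι → ℤ) (Φ : Set (ι → ℚ)) (hS : IsPosSystem A Φ)
    (lam : ι → ℚ) (hdom : IsDom A lam) (hint : IsIntegralWt A lam)
    (π : ι → ℚ) (hπ : IsWeightOf A lam π) :
    InNatSpan (PhiPlusLam A Φ lam) (lam - π) := by
  classical
  obtain ⟨μ, hμdom, hν, w, hwW, hwx⟩ := hπ
  have hμint : IsIntegralWt A μ := mu_int hint hν
  -- convert the Weyl group element to a word
  have hword : ∃ L : List ι, (w : Function.End (ι → ℚ)) = wp A L := weyl_word A hwW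
  obtain ⟨L0, hL0⟩ := hword
  have hπrep : ∃ L : List ι, π = wp A L μ := ⟨L0, by rw [← hL0, hwx]⟩
  -- the orbit, as a finite set
  set O : Set (ι → ℚ) := {y | ∃ L : List ι, y = wp A L μ} with hO
  have hOfin : O.Finite := by
    have himg : O ⊆ (fun w => w μ) '' (WS A) := by
      rintro y ⟨L, rfl⟩
      exact ⟨wp A L, wp_mem_WS L, rfl⟩
    exact Set.Finite.subset ((WS_finite hS).image _) himg
  set Of : Finset (ι → ℚ) := hOfin.toFinset with hOf
  -- a fuel bound for piece1
  have hfuel : ∃ N : ℕ, htQ (lam - μ) ≤ N := by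
    choose f hf using hν
    refine ⟨∑ i, f i, ?_⟩
    unfold htQ
    rw [Nat.cast_sum]
    exact Finset.sum_le_sum fun i _ => le_of_eq (hf i)
  obtain ⟨N, hN⟩ := hfuel
  -- main orbit induction
  have main : ∀ (n : ℕ) (y : ι → ℚ), (∃ L : List ι, y = wp A L μ) →
      (Of.filter (fun z => htQ y < htQ z)).card ≤ n →
      lam - y ∈ AddSubmonoid.closure (PhiPlusLam A Φ lam) := by
    intro n
    induction n with
    | zero =>
        intro y hy hc
        by_cases hdomy : IsDom A y
        · obtain ⟨L, hL⟩ := hy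
          have : μ = y := dom_unique hS (invSet hS L).card L le_rfl μ y hμdom hdomy hL.symm
          rw [← this]
          exact piece1 hS hdom hint N μ hμdom hν hN
        · exfalso
          unfold IsDom at hdomy
          push_neg at hdomy
          obtain ⟨j, hj⟩ := hdomy
          -- the reflection goes up, so the filter is nonempty
          set y' := reflFun A j y with hy'
          have hy'O : ∃ L : List ι, y' = wp A L μ := by
            obtain ⟨L, rfl⟩ := hy
            exact ⟨j :: L, rfl⟩
          have hht : htQ y < htQ y' := by
            rw [hy', refl_apply, htQ_sub, htQ_smul, htQ_al]
            nlinarith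
          have hmem : y' ∈ Of.filter (fun z => htQ y < htQ z) := by
            refine Finset.mem_filter.mpr ⟨?_, hht⟩
            rw [hOf, Set.Finite.mem_toFinset]
            exact hy'O
          have := Finset.card_pos.mpr ⟨y', hmem⟩
          omega
    | succ n ih =>
        intro y hy hc
        by_cases hdomy : IsDom A y
        · obtain ⟨L, hL⟩ := hy
          have : μ = y := dom_unique hS (invSet hS L).card L le_rfl μ y hμdom hdomy hL.symm
          rw [← this]
          exact piece1 hS hdom hint N μ hμdom hν hN
        · unfold IsDom at hdomy
          push_neg at hdomy
          obtain ⟨j, hj⟩ := hdomy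
          set y' := reflFun A j y with hy'
          have hy'O : ∃ L : List ι, y' = wp A L μ := by
            obtain ⟨L, rfl⟩ := hy
            exact ⟨j :: L, rfl⟩
          have hht : htQ y < htQ y' := by
            rw [hy', refl_apply, htQ_sub, htQ_smul, htQ_al]
            nlinarith
          -- the measure strictly decreases
          have hcard : (Of.filter (fun z => htQ y' < htQ z)).card ≤ n := by
            have hss : Of.filter (fun z => htQ y' < htQ z)
                ⊂ Of.filter (fun z => htQ y < htQ z) := by
              refine Finset.ssubset_iff_of_subset ?_ |>.mpr ?_
              · intro z hz
                obtain ⟨hz1, hz2⟩ := Finset.mem_filter.mp hz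
                exact Finset.mem_filter.mpr ⟨hz1, lt_trans hht hz2⟩
              · refine ⟨y', ?_, ?_⟩
                · refine Finset.mem_filter.mpr ⟨?_, hht⟩
                  rw [hOf, Set.Finite.mem_toFinset]
                  exact hy'O
                · intro hcon
                  exact lt_irrefl _ (Finset.mem_filter.mp hcon).2
            have := Finset.card_lt_card hss
            omega
          have hrec := ih y' hy'O hcard
          -- two cases according to whether j is in the support of lam
          by_cases hlj : pairRt A lam j = 0
          · have hlamfix : reflFun A j lam = lam := by
              rw [refl_apply, hlj, zero_smul, sub_zero]
            have hkey : lam - y = reflFun A j (lam - y') := by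
              rw [refl_sub, hlamfix, hy', refl_invol A hS.cartan_diag]
            rw [hkey]
            exact closure_refl_map hS j hlj hrec
          · -- j in the support: add a positive multiple of al j
            have hyint : IsIntegralWt A y := by
              obtain ⟨L, rfl⟩ := hy
              exact wp_integral A L μ hμint
            obtain ⟨mz, hmz⟩ := hyint j
            have hmzneg : mz < 0 := by
              have : (mz : ℚ) < 0 := by rw [← hmz]; exact hj
              exact_mod_cast this
            set m : ℕ := (-mz).toNat with hm
            have hmcast : (m : ℚ) = - pairRt A y j := by
              rw [hmz, hm]
              have h1 : ((-mz).toNat : ℤ) = -mz := Int.toNat_of_nonneg (by omega)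
              have h2 : ((-mz).toNat : ℚ) = ((-mz : ℤ) : ℚ) := by exact_mod_cast h1
              rw [h2]
              push_cast
              ring
            have hkey : lam - y = (lam - y') + (m : ℚ) • al j := by
              rw [hmcast, hy', refl_apply]
              module
            rw [hkey]
            refine AddSubmonoid.add_mem _ hrec ?_
            have halmem : al j ∈ PhiPlusLam A Φ lam :=
              ⟨hS.simple_mem j, j, hlj, by rw [al_self]; norm_num⟩
            have hq : (m:ℚ) • al j = m • al j := by rw [Nat.cast_smul_eq_nsmul]
            rw [hq]
            exact AddSubmonoid.nsmul_mem _ (AddSubmonoid.subset_closure halmem) m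
  obtain ⟨Lπ, hLπ⟩ := hπrep
  exact main (Of.filter (fun z => htQ π < htQ z)).card π ⟨Lπ, hLπ⟩ le_rfl

end WtMain

theorem weight_le_lam_in_PhiPlusLam
    (A : ι → ι → ℤ) (Φ : Set (ι → ℚ)) (hΦ : IsPosSystem A Φ)
    (lam : ι → ℚ) (hdom : IsDom A lam) (hint : IsIntegralWt A lam)
    (π : ι → ℚ) (hπ : IsWeightOf A lam π) :
    InNatSpan (PhiPlusLam A Φ lam) (lam - π) := by
  exact weight_le_lam_in_PhiPlusLam' A Φ hΦ lam hdom hint π hπ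
end

section
/- Let $\lambda$ be a dominant weight and $\mu$ a dominant weight with $\mu \leq_{\mathbb{Q}} \lambda$. Let $\alpha$ be a simple root in $\mathrm{Supp}(\lambda)$ with $\langle \lambda - \mu, \alpha^{\vee}\rangle > r_{\alpha}$, where $r_{\alpha}$ is the number of vertices of the connected component of the Dynkin diagram containing $\alpha$. Let $S(\alpha)$ be the connected component of $\alpha$ inside $(\Delta(\alpha)\setminus\mathrm{Supp}(\mu))\cup\{\alpha\}$, let $\beta$ be an extremal root of $S(\alpha)$, and write $I(\alpha,\beta)=\{\gamma_0=\alpha,\gamma_1,\ldots,\gamma_k\}$ for the minimal connected subset containing $\alpha$ and $\beta$, with $(\lambda-\mu)|_{I(\alpha,\beta)} = \sum_{i=0}^{k} c_i \gamma_i$. Then, setting $c_{k+1}=0$, for every $i \leq k$ one has $c_i \geq \frac{(i+1)c_{i+1} + r_{\alpha}+1}{i+2}$, and consequently $c_i \geq k-i+1 + \frac{r_{\alpha}-k-1}{i+2}$. -/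
open Finset

/-!  Combinatorial model of the weight theory of a connected semisimple algebraic
group (characteristic zero).  Weights are written in coordinates with respect to
the basis `Δ` of simple roots (for a semisimple group every weight is a rational
combination of the simple roots), so the ambient space is `ι → ℚ`, the simple
root `α i` is `Pi.single i 1`, and `A i j = ⟨α i, (α j)ᵛ⟩` is the Cartan matrix.
`Φ` is the set of positive roots (in simple-root coordinates).  -/

variable {ι : Type*} [Fintype ι] [DecidableEq ι]

/-- The Dynkin diagram of the Cartan matrix `A`, as a simple graph on `ι`. -/
def dynkinGraph (A : ι → ι → ℤ) : SimpleGraph ι where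
  Adj i j := i ≠ j ∧ (A i j ≠ 0 ∨ A j i ≠ 0)
  symm := ⟨fun i j h => ⟨h.1.symm, h.2.symm⟩⟩
  loopless := ⟨fun i h => h.1 rfl⟩

/-- Reachability inside a subset `s` of the vertices. -/
def reachWithin (G : SimpleGraph ι) (s : Set ι) (a b : ι) : Prop :=
  ∃ w : G.Walk a b, ∀ x ∈ w.support, x ∈ s

/-- `r_α`: the number of vertices of the connected component of the Dynkin
diagram containing `α`. -/
noncomputable def compRank (A : ι → ι → ℤ) (α : ι) : ℕ :=
  Set.ncard {b | (dynkinGraph A).Reachable α b}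

/-!
STATEMENT 7.  Let `lam` be dominant, `μ` dominant with `μ ≤_ℚ lam`, and let
`α ∈ Supp(lam)` with `⟨lam - μ, αᵛ⟩ > r_α`.  Let `S(α)` be the connected
component of `α` inside `(Δ(α) \ Supp(μ)) ∪ {α}`, let `β` be an extremal root of
`S(α)`, and let `I(α,β) = {γ₀ = α, γ₁, …, γ_k}` be the minimal connected subset
of the Dynkin diagram containing `α` and `β`, a path from `α` to `β`.  Writing
`(lam - μ)|_{I(α,β)} = ∑ cᵢ γᵢ` and setting `c_{k+1} = 0`, one has for every
`i ≤ k`: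
 (i)  `cᵢ ≥ ((i+1)·c_{i+1} + r_α + 1)/(i+2)`, and
 (ii) `cᵢ ≥ k - i + 1 + (r_α - k - 1)/(i+2)`.
-/

theorem coefficients_along_path
    (A : ι → ι → ℤ)
    (hAdiag : ∀ i, A i i = 2)
    (hAoff : ∀ i j, i ≠ j → A i j ≤ 0)
    (hAsym : ∀ i j, A i j = 0 ↔ A j i = 0)
    (lam μ : ι → ℚ) (hlamdom : IsDom A lam) (hμdom : IsDom A μ)
    (hμint : IsIntegralWt A μ) (hlamint : IsIntegralWt A lam)
    -- `μ ≤_ℚ lam`, in simple-root coordinates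
    (hle : ∀ i, 0 ≤ lam i - μ i)
    (α : ι) (hα : pairRt A lam α ≠ 0)
    (hbig : (compRank A α : ℚ) < pairRt A (fun i => lam i - μ i) α)
    -- `S(α)`: the connected component of `α` in `(Δ(α) \ Supp μ) ∪ {α}`
    (Sα : Set ι)
    (hSα : Sα = {b | reachWithin (dynkinGraph A)
      (({b | (dynkinGraph A).Reachable α b} \ {j | pairRt A μ j ≠ 0}) ∪ {α}) α b})
    (β : ι) (hβ : β ∈ Sα)
    -- `β` is an extremal root of `S(α)`
    (hβext : Set.ncard {g | g ∈ Sα ∧ (dynkinGraph A).Adj β g} ≤ 1)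
    -- the path `γ₀ = α, …, γ_k = β`
    (k : ℕ) (γ : Fin (k + 1) → ι)
    (hγ0 : γ 0 = α) (hγk : γ (Fin.last k) = β)
    (hγinj : Function.Injective γ)
    (hγadj : ∀ i : Fin k, (dynkinGraph A).Adj (γ i.castSucc) (γ i.succ))
    (hγS : ∀ i, γ i ∈ Sα)
    -- minimality of `I(α,β) = range γ` among connected subsets containing `α, β`
    (hγmin : ∀ s : Set ι, α ∈ s → β ∈ s →
      (∀ x ∈ s, ∀ y ∈ s, reachWithin (dynkinGraph A) s x y) → Set.range γ ⊆ s)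
    -- the coefficients `cᵢ` of `lam - μ` along the path, with `c_{k+1} = 0`
    (c : ℕ → ℚ)
    (hc : ∀ i : ℕ, c i = if h : i < k + 1 then lam (γ ⟨i, h⟩) - μ (γ ⟨i, h⟩) else 0) :
    (∀ i ≤ k, (((i : ℚ) + 1) * c (i + 1) + (compRank A α : ℚ) + 1) / ((i : ℚ) + 2) ≤ c i) ∧
    (∀ i ≤ k, (k : ℚ) - i + 1 + ((compRank A α : ℚ) - k - 1) / ((i : ℚ) + 2) ≤ c i) := by
    classical
  set r : ℚ := (compRank A α : ℚ) with hr
  set ν : ι → ℚ := fun i => lam i - μ i with hνdef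
  have hνnn : ∀ i, 0 ≤ ν i := hle
  have hpair_sub : ∀ j, pairRt A ν j = pairRt A lam j - pairRt A μ j := by
    intro j
    simp only [pairRt, hνdef, sub_mul, Finset.sum_sub_distrib]
  -- values of c
  have hcval : ∀ i : ℕ, ∀ h : i < k + 1, c i = ν (γ ⟨i, h⟩) := by
    intro i h; rw [hc, dif_pos h]
  have hczero : ∀ i, k < i → c i = 0 := by
    intro i hi; rw [hc, dif_neg (by omega)]
  have hcnn : ∀ i, 0 ≤ c i := by
    intro i; rw [hc]; split
    · exact hle _
    · exact le_refl 0
  -- membership facts coming from Sα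
  have hmemS : ∀ i : Fin (k + 1),
      γ i ∈ (({b | (dynkinGraph A).Reachable α b} \ {j | pairRt A μ j ≠ 0}) ∪ {α} : Set ι) := by
    intro i
    have h := hγS i
    rw [hSα] at h
    obtain ⟨w, hw⟩ := h
    exact hw _ (SimpleGraph.Walk.end_mem_support w)
  have hreach : ∀ i : Fin (k + 1), (dynkinGraph A).Reachable α (γ i) := by
    intro i
    rcases hmemS i with h | h
    · exact h.1
    · rw [Set.mem_singleton_iff] at h; rw [h]
  have hμzero : ∀ i : Fin (k + 1), i ≠ 0 → pairRt A μ (γ i) = 0 := by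
    intro i hi
    rcases hmemS i with h | h
    · by_contra hne; exact h.2 hne
    · rw [Set.mem_singleton_iff, ← hγ0] at h
      exact absurd (hγinj h) hi
  -- r ≥ k + 1
  have hrk : (k : ℚ) + 1 ≤ r := by
    have hsub : Set.range γ ⊆ {b | (dynkinGraph A).Reachable α b} := by
      rintro x ⟨i, rfl⟩; exact hreach i
    have h1 : (Set.range γ).ncard = k + 1 := by
      rw [← Set.image_univ, ← Finset.coe_univ, ← Finset.coe_image,
        Set.ncard_coe_finset, Finset.card_image_of_injective _ hγinj]
      simp
    have h2 : (Set.range γ).ncard ≤ compRank A α := by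
      rw [compRank]
      exact Set.ncard_le_ncard hsub (Set.toFinite _)
    rw [h1] at h2
    rw [hr]
    exact_mod_cast h2
  -- Cartan entries along the path are ≤ -1
  have hAneg : ∀ i : Fin k, (A (γ i.castSucc) (γ i.succ) : ℚ) ≤ -1 ∧
      (A (γ i.succ) (γ i.castSucc) : ℚ) ≤ -1 := by
    intro i
    obtain ⟨hne, hor⟩ := hγadj i
    have hne1 : A (γ i.castSucc) (γ i.succ) ≠ 0 ∧ A (γ i.succ) (γ i.castSucc) ≠ 0 := by
      rcases hor with h | h
      · exact ⟨h, fun hz => h ((hAsym _ _).mpr hz)⟩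
      · exact ⟨fun hz => h ((hAsym _ _).mp hz), h⟩
    have ho1 := hAoff _ _ hne
    have ho2 := hAoff _ _ hne.symm
    constructor
    · have : A (γ i.castSucc) (γ i.succ) ≤ -1 := by omega
      exact_mod_cast this
    · have : A (γ i.succ) (γ i.castSucc) ≤ -1 := by omega
      exact_mod_cast this
  -- generic upper bound on a pairing
  have hbound : ∀ (j : Fin (k + 1)) (T : Finset ι), γ j ∉ T →
      pairRt A ν (γ j) ≤ 2 * ν (γ j) + ∑ t ∈ T, ν t * (A t (γ j) : ℚ) := by
    intro j T hT
    have hsplit := Finset.sum_add_sum_compl (insert (γ j) T)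
      (fun i => ν i * (A i (γ j) : ℚ))
    have h1 : ∑ i ∈ insert (γ j) T, ν i * (A i (γ j) : ℚ)
        = 2 * ν (γ j) + ∑ t ∈ T, ν t * (A t (γ j) : ℚ) := by
      rw [Finset.sum_insert hT, hAdiag]
      push_cast
      ring
    have h2 : ∑ i ∈ (insert (γ j) T)ᶜ, ν i * (A i (γ j) : ℚ) ≤ 0 := by
      apply Finset.sum_nonpos
      intro i hi
      have hne : i ≠ γ j := by
        intro h
        rw [Finset.mem_compl] at hi
        exact hi (h ▸ Finset.mem_insert_self _ _)
      have := hAoff i (γ j) hne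
      exact mul_nonpos_of_nonneg_of_nonpos (hνnn i) (by exact_mod_cast this)
    have : pairRt A ν (γ j) = ∑ i ∈ insert (γ j) T, ν i * (A i (γ j) : ℚ)
        + ∑ i ∈ (insert (γ j) T)ᶜ, ν i * (A i (γ j) : ℚ) := by
      rw [hsplit, pairRt]
    linarith
  -- dominance of ν at interior vertices
  have hνdom : ∀ j : Fin (k + 1), j ≠ 0 → 0 ≤ pairRt A ν (γ j) := by
    intro j hj
    rw [hpair_sub, hμzero j hj, sub_zero]
    exact hlamdom _
  -- base pairing bound from integrality
  have hbase0 : r + 1 ≤ pairRt A ν α := by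
    obtain ⟨m, hm⟩ := hlamint α
    obtain ⟨n, hn⟩ := hμint α
    have hmn : pairRt A ν α = ((m - n : ℤ) : ℚ) := by
      rw [hpair_sub, hm, hn]; push_cast; ring
    have hbig' : r < pairRt A ν α := hbig
    rw [hmn] at hbig' ⊢
    rw [hr] at hbig' ⊢
    have h1 : (compRank A α : ℤ) < m - n := by exact_mod_cast hbig'
    have h2 : (compRank A α : ℤ) + 1 ≤ m - n := h1
    exact_mod_cast h2
  -- base inequality : 2 c 0 - c 1 ≥ r + 1
  have hbase : r + 1 + c 1 ≤ 2 * c 0 := by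
    have hγ0' : γ (⟨0, by omega⟩ : Fin (k + 1)) = α := hγ0
    rcases Nat.eq_zero_or_pos k with hk0 | hkpos
    · have hc1 : c 1 = 0 := hczero 1 (by omega)
      have hb := hbound ⟨0, by omega⟩ ∅ (Finset.notMem_empty _)
      rw [Finset.sum_empty, hγ0'] at hb
      have hc0 : c 0 = ν α := by rw [hcval 0 (by omega), hγ0']
      rw [hc1, hc0]
      linarith
    · have h1 : (1 : ℕ) < k + 1 := by omega
      set j1 : Fin (k + 1) := ⟨1, h1⟩ with hj1
      have hne : α ≠ γ j1 := by
        rw [← hγ0']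
        intro h
        have := hγinj h
        simp [hj1, Fin.ext_iff] at this
      have hb := hbound ⟨0, by omega⟩ {γ j1}
        (by rw [hγ0', Finset.mem_singleton]; exact hne)
      rw [hγ0', Finset.sum_singleton] at hb
      have hA1 : (A (γ j1) α : ℚ) ≤ -1 := by
        have := (hAneg ⟨0, hkpos⟩).2
        have e1 : (⟨0, hkpos⟩ : Fin k).succ = j1 := by simp [hj1, Fin.ext_iff]
        have e2 : (⟨0, hkpos⟩ : Fin k).castSucc = ⟨0, by omega⟩ := by
          simp [Fin.ext_iff]
        rw [e1, e2, hγ0'] at this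
        exact this
      have hterm : ν (γ j1) * (A (γ j1) α : ℚ) ≤ -ν (γ j1) := by
        have := mul_le_mul_of_nonneg_left hA1 (hνnn (γ j1))
        linarith
      have hc0 : c 0 = ν α := by rw [hcval 0 (by omega), hγ0']
      have hc1 : c 1 = ν (γ j1) := hcval 1 h1
      rw [hc0, hc1]
      linarith
  -- concavity : for 1 ≤ j ≤ k, c (j-1) + c (j+1) ≤ 2 c j
  have hconc : ∀ j : ℕ, 1 ≤ j → j ≤ k → c (j - 1) + c (j + 1) ≤ 2 * c j := by
    intro j hj1 hjk
    have hjlt : j < k + 1 := by omega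
    have hjm : j - 1 < k + 1 := by omega
    set jf : Fin (k + 1) := ⟨j, hjlt⟩ with hjf
    set jm : Fin (k + 1) := ⟨j - 1, hjm⟩ with hjm'
    have hjne0 : jf ≠ 0 := by simp [hjf, Fin.ext_iff]; omega
    have hdom := hνdom jf hjne0
    have hnem : γ jf ≠ γ jm := by
      intro h; have := hγinj h; simp [hjf, hjm', Fin.ext_iff] at this; omega
    -- Cartan entry from γ jm to γ jf
    have hAm : (A (γ jm) (γ jf) : ℚ) ≤ -1 := by
      have hlt : j - 1 < k := by omega
      have := (hAneg ⟨j - 1, hlt⟩).1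
      have e1 : (⟨j - 1, hlt⟩ : Fin k).castSucc = jm := by simp [hjm', Fin.ext_iff]
      have e2 : (⟨j - 1, hlt⟩ : Fin k).succ = jf := by
        simp [hjf, Fin.ext_iff]; omega
      rwa [e1, e2] at this
    have hcm : c (j - 1) = ν (γ jm) := hcval (j - 1) hjm
    have hcj : c j = ν (γ jf) := hcval j hjlt
    rcases Nat.lt_or_ge j k with hjk' | hjk'
    · -- interior vertex: two neighbours
      have hjp : j + 1 < k + 1 := by omega
      set jp : Fin (k + 1) := ⟨j + 1, hjp⟩ with hjp'
      have hnep : γ jf ≠ γ jp := by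
        intro h; have := hγinj h; simp [hjf, hjp', Fin.ext_iff] at this
      have hnemp : γ jm ≠ γ jp := by
        intro h; have := hγinj h; simp [hjm', hjp', Fin.ext_iff] at this
      have hAp : (A (γ jp) (γ jf) : ℚ) ≤ -1 := by
        have := (hAneg ⟨j, hjk'⟩).2
        have e1 : (⟨j, hjk'⟩ : Fin k).succ = jp := by simp [hjp', Fin.ext_iff]
        have e2 : (⟨j, hjk'⟩ : Fin k).castSucc = jf := by simp [hjf, Fin.ext_iff]
        rwa [e1, e2] at this
      have hb := hbound jf {γ jm, γ jp} (by
        simp only [Finset.mem_insert, Finset.mem_singleton]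
        push_neg
        exact ⟨hnem, hnep⟩)
      rw [Finset.sum_pair hnemp] at hb
      have ht1 : ν (γ jm) * (A (γ jm) (γ jf) : ℚ) ≤ -ν (γ jm) := by
        have := mul_le_mul_of_nonneg_left hAm (hνnn (γ jm)); linarith
      have ht2 : ν (γ jp) * (A (γ jp) (γ jf) : ℚ) ≤ -ν (γ jp) := by
        have := mul_le_mul_of_nonneg_left hAp (hνnn (γ jp)); linarith
      have hcp : c (j + 1) = ν (γ jp) := hcval (j + 1) hjp
      rw [hcm, hcj, hcp]
      linarith
    · -- j = k : only one neighbour needed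
      have hjk'' : j = k := by omega
      have hcp : c (j + 1) = 0 := hczero (j + 1) (by omega)
      have hb := hbound jf {γ jm} (by rw [Finset.mem_singleton]; exact hnem)
      rw [Finset.sum_singleton] at hb
      have ht1 : ν (γ jm) * (A (γ jm) (γ jf) : ℚ) ≤ -ν (γ jm) := by
        have := mul_le_mul_of_nonneg_left hAm (hνnn (γ jm)); linarith
      rw [hcm, hcj, hcp]
      linarith
  -- main recursive inequality (multiplied form)
  have P1 : ∀ i, i ≤ k → ((i : ℚ) + 1) * c (i + 1) + r + 1 ≤ ((i : ℚ) + 2) * c i := by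
    intro i
    induction i with
    | zero =>
      intro _
      push_cast
      linarith [hbase]
    | succ n ih =>
      intro hn
      have h1 := ih (by omega)
      have h2 := hconc (n + 1) (by omega) hn
      have h2' : c n + c (n + 2) ≤ 2 * c (n + 1) := by
        have e : n + 1 - 1 = n := by omega
        rw [e] at h2
        exact h2
      have hpos : (0 : ℚ) ≤ (n : ℚ) + 2 := by positivity
      have h3 := mul_le_mul_of_nonneg_left h2' hpos
      push_cast
      push_cast at h1
      nlinarith [h1, h3]
  have hq : 0 ≤ r - (k : ℚ) - 1 := by linarith
  -- part (ii) in multiplied form, by downward induction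
  have P2 : ∀ d i, i + d = k → (k : ℚ) - i + 1 + (r - k - 1) / ((i : ℚ) + 2) ≤ c i := by
    intro d
    induction d with
    | zero =>
      intro i hi
      have hik : i = k := by omega
      subst hik
      have h1 := P1 i le_rfl
      rw [hczero (i + 1) (by omega)] at h1
      have hi2 : (0 : ℚ) < (i : ℚ) + 2 := by positivity
      have heq : (i : ℚ) - i + 1 + (r - i - 1) / ((i : ℚ) + 2)
          = (r + 1) / ((i : ℚ) + 2) := by
        field_simp
        ring
      rw [heq, div_le_iff₀ hi2]
      nlinarith [h1]
    | succ d ih =>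
      intro i hi
      have h1 := ih (i + 1) (by omega)
      have h2 := P1 i (by omega)
      have hi2 : (0 : ℚ) < (i : ℚ) + 2 := by positivity
      have hi3 : (0 : ℚ) < (i : ℚ) + 3 := by positivity
      push_cast at h1
      -- c (i+1) ≥ k - i
      have h3 : (k : ℚ) - i ≤ c (i + 1) := by
        have hdiv : 0 ≤ (r - (k : ℚ) - 1) / ((i : ℚ) + 1 + 2) :=
          div_nonneg hq (by positivity)
        linarith
      have h4 : ((i : ℚ) + 1) * ((k : ℚ) - i) ≤ ((i : ℚ) + 1) * c (i + 1) :=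
        mul_le_mul_of_nonneg_left h3 (by positivity)
      have heq : (k : ℚ) - i + 1 + (r - k - 1) / ((i : ℚ) + 2)
          = (((i : ℚ) + 2) * ((k : ℚ) - i + 1) + (r - (k : ℚ) - 1)) / ((i : ℚ) + 2) := by
        field_simp
      rw [heq, div_le_iff₀ hi2]
      nlinarith [h2, h4]
  constructor
  · intro i hi
    have h1 := P1 i hi
    have hi2 : (0 : ℚ) < (i : ℚ) + 2 := by positivity
    rw [div_le_iff₀ hi2]
    nlinarith [h1]
  · intro i hi
    exact P2 (k - i) i (by omega)
end
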